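/- There exists δ₀ > 0 with the following property. Let 0 < δ ≤ δ₀ and let Φ = (φ_1,…,φ_m) be a δ-admissible system of unit vectors in ℝ^d. Then for every nonzero x ∈ ℝ^d and every y ∈ ℝ^d with ‖x − y‖ ≤ δ‖x‖, the averaged one-step phase-adapting Kaczmarz error satisfies (1/m)Σ_{i=1}^m ‖x − (y + (σ(⟨y,φ_i⟩)·|⟨x,φ_i⟩| − ⟨y,φ_i⟩)·φ_i)‖² ≤ (1 − 1/(4d))·‖x − y‖². -/

import Mathlib

open InnerProductGeometry Finset
open scoped RealInnerProductSpace Classical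

/-- The sign function with the convention `σ(w) = 1` if `w ≥ 0` and `σ(w) = -1` if `w < 0`. -/
noncomputable def sgn (w : ℝ) : ℝ := if 0 ≤ w then 1 else -1

/-- A system `Φ = (φ_1, …, φ_m)` of unit vectors in `ℝ^d` is `δ`-admissible if:
(1) for all nonzero `x, y`, the fraction of indices with `σ(⟨x,φ_i⟩) ≠ σ(⟨y,φ_i⟩)` is at
most `δ + θ_{x,y}/π`; (2) `‖z‖²/(2d) ≤ (1/m)Σ⟨z,φ_i⟩² ≤ 3‖z‖²/(2d)` for all `z`;
(3) `(1/m)Σ ⟨z,φ_i⟩⁴·1{⟨z,φ_i⟩² ≤ ‖z‖²/(δd)} ≤ 4‖z‖⁴/d²` for all `z`;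
(4) `(1/m)Σ ⟨z,φ_i⟩²·1{⟨z,φ_i⟩² > ‖z‖²/(δd)} ≤ 4δ‖z‖²/d` for all `z`. -/
def IsAdmissible (d m : ℕ) (δ : ℝ) (Φ : Fin m → EuclideanSpace ℝ (Fin d)) : Prop :=
  (∀ i, ‖Φ i‖ = 1) ∧
  (∀ x y : EuclideanSpace ℝ (Fin d), x ≠ 0 → y ≠ 0 →
    ((univ.filter fun i => sgn ⟪x, Φ i⟫ ≠ sgn ⟪y, Φ i⟫).card : ℝ) / m
      ≤ δ + angle x y / Real.pi) ∧
  (∀ z : EuclideanSpace ℝ (Fin d),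
    ‖z‖ ^ 2 / (2 * d) ≤ (1 / m : ℝ) * ∑ i, ⟪z, Φ i⟫ ^ 2 ∧
    (1 / m : ℝ) * ∑ i, ⟪z, Φ i⟫ ^ 2 ≤ 3 * ‖z‖ ^ 2 / (2 * d)) ∧
  (∀ z : EuclideanSpace ℝ (Fin d),
    (1 / m : ℝ) * ∑ i, (if ⟪z, Φ i⟫ ^ 2 ≤ ‖z‖ ^ 2 / (δ * d) then ⟪z, Φ i⟫ ^ 4 else 0)
      ≤ 4 * ‖z‖ ^ 4 / d ^ 2) ∧
  (∀ z : EuclideanSpace ℝ (Fin d),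
    (1 / m : ℝ) * ∑ i, (if ‖z‖ ^ 2 / (δ * d) < ⟪z, Φ i⟫ ^ 2 then ⟪z, Φ i⟫ ^ 2 else 0)
      ≤ 4 * δ * ‖z‖ ^ 2 / d)

/-!
Write `z = x - y`. A step along the unit vector `φ` changes `‖z‖²` by `-⟪z, φ⟫² + 4⟪x, φ⟫²`
if the signs of `⟪x, φ⟫` and `⟪y, φ⟫` differ, and by `-⟪z, φ⟫²` otherwise. On average the
gain is at least `‖z‖²/(2d)` by the frame bound (2). A sign mismatch forces
`⟪x, φ⟫² ≤ ⟪z, φ⟫²`, and `‖z‖ ≤ δ‖x‖` keeps the angle between `x` and `y` below `πδ`, so by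
(1) at most `2δm` indices mismatch. Cauchy–Schwarz with (3) for the residuals below the
threshold and (4) for those above it bounds the average loss by `4(√(8δ) + 4δ)‖z‖²/d`, which
is at most `‖z‖²/(4d)` once `δ ≤ 10⁻⁴`.
-/

lemma sq_le_sq_sub_of_sgn_ne {a b : ℝ} (h : sgn a ≠ sgn b) : a ^ 2 ≤ (a - b) ^ 2 := by
  unfold sgn at h
  rcases le_or_gt 0 a with ha | ha <;> rcases le_or_gt 0 b with hb | hb
  · simp [ha, hb] at h
  · nlinarith
  · nlinarith
  · simp [not_le.2 ha, not_le.2 hb] at h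

lemma sgn_mul_abs_sub (a b : ℝ) :
    sgn b * |a| - b = a - b - if sgn a ≠ sgn b then 2 * a else 0 := by
  rcases le_or_gt 0 a with ha | ha <;> rcases le_or_gt 0 b with hb | hb <;>
    simp [sgn, ha, hb, abs_of_nonneg, abs_of_neg, not_le.2, show (1 : ℝ) ≠ -1 by norm_num,
      show (-1 : ℝ) ≠ 1 by norm_num] <;> ring

lemma cos_pi_mul_le_one_sub_two_mul_sq {δ : ℝ} (hδ0 : 0 ≤ δ) (hδ1 : δ ≤ 1) :
    Real.cos (Real.pi * δ) ≤ 1 - 2 * δ ^ 2 := by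
  have h := Real.cos_le_one_sub_mul_cos_sq (x := Real.pi * δ)
    (by rw [abs_of_nonneg (by positivity)]; nlinarith [Real.pi_pos])
  have hπ := Real.pi_pos.ne'
  rwa [show 2 / Real.pi ^ 2 * (Real.pi * δ) ^ 2 = 2 * δ ^ 2 by field_simp] at h

section InnerProductSpace

variable {E : Type*} [NormedAddCommGroup E] [InnerProductSpace ℝ E]

lemma norm_sub_smul_sq_of_norm_eq_one (z : E) {φ : E} (hφ : ‖φ‖ = 1) (c : ℝ) :
    ‖z - c • φ‖ ^ 2 = ‖z‖ ^ 2 - ⟪z, φ⟫ ^ 2 + (c - ⟪z, φ⟫) ^ 2 := by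
  rw [norm_sub_sq_real, real_inner_smul_right, norm_smul, hφ, Real.norm_eq_abs, mul_one, sq_abs]
  ring

lemma norm_sub_kaczmarz_step_sq (x y : E) {φ : E} (hφ : ‖φ‖ = 1) :
    ‖x - (y + (sgn ⟪y, φ⟫ * |⟪x, φ⟫| - ⟪y, φ⟫) • φ)‖ ^ 2
      = ‖x - y‖ ^ 2 - ⟪x - y, φ⟫ ^ 2
        + 4 * if sgn ⟪x, φ⟫ ≠ sgn ⟪y, φ⟫ then ⟪x, φ⟫ ^ 2 else 0 := by
  rw [← sub_sub, norm_sub_smul_sq_of_norm_eq_one _ hφ, sgn_mul_abs_sub, inner_sub_left]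
  split_ifs <;> ring

lemma mean_norm_sub_kaczmarz_step_sq {m : ℕ} (hm : m ≠ 0) {Φ : Fin m → E}
    (hΦ : ∀ i, ‖Φ i‖ = 1) (x y : E) :
    (1 / m : ℝ) * ∑ i, ‖x - (y + (sgn ⟪y, Φ i⟫ * |⟪x, Φ i⟫| - ⟪y, Φ i⟫) • Φ i)‖ ^ 2
      = ‖x - y‖ ^ 2 - (1 / m : ℝ) * ∑ i, ⟪x - y, Φ i⟫ ^ 2
        + 4 * ((1 / m : ℝ) * ∑ i with sgn ⟪x, Φ i⟫ ≠ sgn ⟪y, Φ i⟫, ⟪x, Φ i⟫ ^ 2) := by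
  simp only [norm_sub_kaczmarz_step_sq x y (hΦ _), sum_add_distrib, sum_sub_distrib,
    ← mul_sum, sum_filter, sum_const, card_univ, Fintype.card_fin, nsmul_eq_mul]
  field_simp

lemma one_sub_two_mul_sq_le_cos_angle {x y : E} {δ : ℝ} (hx : x ≠ 0) (hδ : δ ≤ 1 / 2)
    (hxy : ‖x - y‖ ≤ δ * ‖x‖) : 1 - 2 * δ ^ 2 ≤ Real.cos (angle x y) := by
  have hxpos : 0 < ‖x‖ := norm_pos_iff.2 hx
  have hδ0 : 0 ≤ δ := nonneg_of_mul_nonneg_left ((norm_nonneg _).trans hxy) hxpos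
  have hxy' : ‖x‖ ≤ 2 * ‖y‖ := by nlinarith [norm_sub_norm_le x y]
  have hypos : 0 < ‖y‖ := by linarith
  rw [cos_angle, le_div_iff₀ (mul_pos hxpos hypos)]
  -- law of cosines: `2⟪x, y⟫ = ‖x‖² + ‖y‖² - ‖x - y‖² ≥ 2‖x‖‖y‖ - δ²‖x‖²`
  nlinarith [norm_sub_sq_real x y, sq_nonneg (‖x‖ - ‖y‖), norm_nonneg (x - y),
    mul_le_mul_of_nonneg_left hxy' (by positivity : (0 : ℝ) ≤ δ ^ 2 * ‖x‖)]

lemma angle_div_pi_le_of_norm_sub_le {x y : E} {δ : ℝ} (hx : x ≠ 0) (hδ : δ ≤ 1 / 2)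
    (hxy : ‖x - y‖ ≤ δ * ‖x‖) : angle x y / Real.pi ≤ δ := by
  have hδ0 : 0 ≤ δ :=
    nonneg_of_mul_nonneg_left ((norm_nonneg _).trans hxy) (norm_pos_iff.2 hx)
  have hπδ : Real.pi * δ ∈ Set.Icc 0 Real.pi := ⟨by positivity, by nlinarith [Real.pi_pos]⟩
  have hcos := (cos_pi_mul_le_one_sub_two_mul_sq hδ0 (by linarith)).trans
    (one_sub_two_mul_sq_le_cos_angle hx hδ hxy)
  rw [div_le_iff₀ Real.pi_pos, mul_comm]
  exact (Real.strictAntiOn_cos.le_iff_ge hπδ ⟨angle_nonneg x y, angle_le_pi x y⟩).1 hcos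

end InnerProductSpace

lemma sum_sq_le_sqrt_card_mul_add_tail {ι : Type*} {s t : Finset ι} (hst : s ⊆ t)
    (f : ι → ℝ) (τ : ℝ) :
    ∑ i ∈ s, f i ^ 2 ≤ √(#s * ∑ i ∈ t, if f i ^ 2 ≤ τ then f i ^ 4 else 0)
      + ∑ i ∈ t, if τ < f i ^ 2 then f i ^ 2 else 0 := by
  set g : ι → ℝ := fun i => if f i ^ 2 ≤ τ then f i ^ 2 else 0
  set h : ι → ℝ := fun i => if τ < f i ^ 2 then f i ^ 2 else 0
  have hsplit : ∀ i, f i ^ 2 = g i + h i := fun i => by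
    by_cases hi : f i ^ 2 ≤ τ <;> simp [g, h, hi, not_lt.2, lt_of_not_ge]
  have hg : ∑ i ∈ s, g i ≤ √(#s * ∑ i ∈ t, g i ^ 2) := by
    refine Real.le_sqrt_of_sq_le ((sq_sum_le_card_mul_sum_sq).trans ?_)
    gcongr
  have hg4 : ∀ i, g i ^ 2 = if f i ^ 2 ≤ τ then f i ^ 4 else 0 := fun i => by
    simp only [g]; split_ifs <;> ring
  have hh : ∑ i ∈ s, h i ≤ ∑ i ∈ t, h i :=
    sum_le_sum_of_subset_of_nonneg hst fun i _ _ => by simp only [h]; positivity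
  calc ∑ i ∈ s, f i ^ 2 = ∑ i ∈ s, g i + ∑ i ∈ s, h i := by
        rw [← sum_add_distrib]; exact sum_congr rfl fun i _ => hsplit i
    _ ≤ _ := by
        rw [sum_congr rfl fun i _ => (hg4 i).symm]
        exact add_le_add hg hh

namespace IsAdmissible

variable {d m : ℕ} {δ : ℝ} {Φ : Fin m → EuclideanSpace ℝ (Fin d)}

lemma ne_zero (hΦ : IsAdmissible d m δ Φ) {x : EuclideanSpace ℝ (Fin d)} (hx : x ≠ 0) :
    m ≠ 0 := by
  rintro rfl
  have hd : (d : ℝ) ≠ 0 := by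
    rintro hd
    obtain rfl : d = 0 := by exact_mod_cast hd
    exact hx (Subsingleton.elim x 0)
  have h := (hΦ.2.2.1 x).1
  simp only [Nat.cast_zero, div_zero, univ_eq_empty, sum_empty, mul_zero] at h
  have : 0 < ‖x‖ ^ 2 / (2 * d) := by
    have : (0 : ℝ) < d := lt_of_le_of_ne (Nat.cast_nonneg d) hd.symm
    positivity
  linarith

lemma card_sgn_ne_div_le (hΦ : IsAdmissible d m δ Φ) (hδ : δ ≤ 1 / 2)
    {x y : EuclideanSpace ℝ (Fin d)} (hx : x ≠ 0) (hxy : ‖x - y‖ ≤ δ * ‖x‖) :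
    ((univ.filter fun i => sgn ⟪x, Φ i⟫ ≠ sgn ⟪y, Φ i⟫).card : ℝ) / m ≤ 2 * δ := by
  have hy : y ≠ 0 := by
    rintro rfl
    rw [sub_zero] at hxy
    nlinarith [norm_pos_iff.2 hx]
  linarith [hΦ.2.1 x y hx hy, angle_div_pi_le_of_norm_sub_le hx hδ hxy]

lemma mean_sq_sgn_ne_le (hΦ : IsAdmissible d m δ Φ) (hδ : 0 ≤ δ) (hδ1 : δ ≤ 1 / 2)
    {x y : EuclideanSpace ℝ (Fin d)} (hx : x ≠ 0) (hxy : ‖x - y‖ ≤ δ * ‖x‖) :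
    (1 / m : ℝ) * ∑ i with sgn ⟪x, Φ i⟫ ≠ sgn ⟪y, Φ i⟫, ⟪x, Φ i⟫ ^ 2
      ≤ (√(8 * δ) + 4 * δ) * (‖x - y‖ ^ 2 / d) := by
  set M := univ.filter fun i => sgn ⟪x, Φ i⟫ ≠ sgn ⟪y, Φ i⟫
  set τ := ‖x - y‖ ^ 2 / (δ * d)
  set S4 := ∑ i, if ⟪x - y, Φ i⟫ ^ 2 ≤ τ then ⟪x - y, Φ i⟫ ^ 4 else 0
  have hS4 : 0 ≤ S4 := sum_nonneg fun i _ => by split_ifs <;> positivity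
  have hmis : ∑ i ∈ M, ⟪x, Φ i⟫ ^ 2 ≤ ∑ i ∈ M, ⟪x - y, Φ i⟫ ^ 2 :=
    sum_le_sum fun i hi => by
      rw [inner_sub_left]
      exact sq_le_sq_sub_of_sgn_ne (mem_filter.1 hi).2
  have hsplit := sum_sq_le_sqrt_card_mul_add_tail (subset_univ M) (fun i => ⟪x - y, Φ i⟫) τ
  have hsmall : (1 / m : ℝ) * √(#M * S4) ≤ √(8 * δ) * (‖x - y‖ ^ 2 / d) := calc
    (1 / m : ℝ) * √(#M * S4) = √((#M / m) * ((1 / m) * S4)) := by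
      rw [show (#M / m : ℝ) * ((1 / m) * S4) = (1 / m) ^ 2 * (#M * S4) by ring,
        Real.sqrt_mul (sq_nonneg _), Real.sqrt_sq (by positivity)]
    _ ≤ √(2 * δ * (4 * ‖x - y‖ ^ 4 / d ^ 2)) :=
      Real.sqrt_le_sqrt (mul_le_mul (hΦ.card_sgn_ne_div_le hδ1 hx hxy) (hΦ.2.2.2.1 (x - y))
        (by positivity) (by positivity))
    _ = √(8 * δ) * (‖x - y‖ ^ 2 / d) := by
      rw [show 2 * δ * (4 * ‖x - y‖ ^ 4 / d ^ 2) = 8 * δ * (‖x - y‖ ^ 2 / d) ^ 2 by ring,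
        Real.sqrt_mul (by positivity), Real.sqrt_sq (by positivity)]
  have hlarge := hΦ.2.2.2.2 (x - y)
  calc (1 / m : ℝ) * ∑ i ∈ M, ⟪x, Φ i⟫ ^ 2
      ≤ (1 / m : ℝ) * √(#M * S4) + (1 / m : ℝ) * ∑ i,
          if τ < ⟪x - y, Φ i⟫ ^ 2 then ⟪x - y, Φ i⟫ ^ 2 else 0 := by
        rw [← mul_add]
        exact mul_le_mul_of_nonneg_left (hmis.trans hsplit) (by positivity)
    _ ≤ (√(8 * δ) + 4 * δ) * (‖x - y‖ ^ 2 / d) := by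
        linarith [show 4 * δ * ‖x - y‖ ^ 2 / d = 4 * δ * (‖x - y‖ ^ 2 / d) by ring]

end IsAdmissible

/-- There exists `δ₀ > 0` such that for any `0 < δ ≤ δ₀`, any
`δ`-admissible system `Φ` of unit vectors in `ℝ^d`, any nonzero `x` and any `y` with
`‖x − y‖ ≤ δ‖x‖`, the averaged one-step phase-adapting Kaczmarz error satisfies
`(1/m)Σ_i ‖x − (y + (σ(⟨y,φ_i⟩)|⟨x,φ_i⟩| − ⟨y,φ_i⟩)φ_i)‖² ≤ (1 − 1/(4d))‖x − y‖²`. -/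
theorem admissible_implies_conditional_contraction :
    ∃ δ₀ : ℝ, 0 < δ₀ ∧
      ∀ (δ : ℝ), 0 < δ → δ ≤ δ₀ →
      ∀ (d m : ℕ) (Φ : Fin m → EuclideanSpace ℝ (Fin d)), IsAdmissible d m δ Φ →
      ∀ (x : EuclideanSpace ℝ (Fin d)), x ≠ 0 →
      ∀ (y : EuclideanSpace ℝ (Fin d)), ‖x - y‖ ≤ δ * ‖x‖ →
        (1 / m : ℝ) * ∑ i, ‖x - (y + (sgn ⟪y, Φ i⟫ * |⟪x, Φ i⟫| - ⟪y, Φ i⟫) • Φ i)‖ ^ 2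
          ≤ (1 - 1 / (4 * d)) * ‖x - y‖ ^ 2 := by
  refine ⟨1 / 10000, by norm_num, fun δ hδ hδ₀ d m Φ hΦ x hx y hxy => ?_⟩
  rw [mean_norm_sub_kaczmarz_step_sq (hΦ.ne_zero hx) hΦ.1]
  have hframe := (hΦ.2.2.1 (x - y)).1
  have hmis := hΦ.mean_sq_sgn_ne_le hδ.le (by linarith) hx hxy
  have hsqrt : √(8 * δ) ≤ 3 / 100 :=
    Real.sqrt_le_iff.2 ⟨by norm_num, by nlinarith⟩
  have hu : 0 ≤ ‖x - y‖ ^ 2 / d := by positivity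
  have hcoef := mul_le_mul_of_nonneg_right (show √(8 * δ) + 4 * δ ≤ 1 / 16 by linarith) hu
  have h2d : ‖x - y‖ ^ 2 / (2 * d) = ‖x - y‖ ^ 2 / d / 2 := by ring
  have h4d : (1 - 1 / (4 * d)) * ‖x - y‖ ^ 2 = ‖x - y‖ ^ 2 - ‖x - y‖ ^ 2 / d / 4 := by ring
  rw [h4d]
  linarith
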